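/- Assume σ_min(A) > 1 and let x* be the unique solution of Ax - |x| - b = 0. For the unregularized flow dx/dt = -γ Aᵀ r(x) (γ > 0), the Lyapunov function V(x) = ½‖x - x*‖² satisfies, at any point x, ⟨x - x*, -γAᵀr(x)⟩ ≤ -(γ μ²/(L₁+L₂)²) V(x), where μ = σ_min(A)² - 1, L₁ = ‖A+I‖, L₂ = ‖A-I‖; i.e., V decays at least exponentially along solutions. -/

import Mathlib

open Matrix
open scoped BigOperators

/-- Euclidean norm of a vector in ℝⁿ. -/
noncomputable def evnorm {n : ℕ} (x : Fin n → ℝ) : ℝ := Real.sqrt (∑ i, x i ^ 2)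

/-- Componentwise absolute value. -/
def vabs {n : ℕ} (x : Fin n → ℝ) : Fin n → ℝ := fun i => |x i|

/-- Spectral norm: sup of ‖Ax‖ over unit vectors x. -/
noncomputable def specNorm {n : ℕ} (A : Matrix (Fin n) (Fin n) ℝ) : ℝ :=
  sSup {c : ℝ | ∃ x : Fin n → ℝ, evnorm x = 1 ∧ c = evnorm (A *ᵥ x)}

/-- Smallest singular value: inf of ‖Ax‖ over unit vectors x. -/
noncomputable def sigmaMin {n : ℕ} (A : Matrix (Fin n) (Fin n) ℝ) : ℝ :=
  sInf {c : ℝ | ∃ x : Fin n → ℝ, evnorm x = 1 ∧ c = evnorm (A *ᵥ x)}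

open scoped RealInnerProductSpace

section helpers
variable {n : ℕ}

noncomputable def toE (x : Fin n → ℝ) : EuclideanSpace ℝ (Fin n) := (WithLp.equiv 2 _).symm x

lemma evnorm_toE (x : Fin n → ℝ) : evnorm x = ‖toE x‖ := by
  rw [EuclideanSpace.norm_eq]
  simp [evnorm, toE, sq_abs]

lemma evnorm_nonneg (x : Fin n → ℝ) : 0 ≤ evnorm x := Real.sqrt_nonneg _

lemma evnorm_sq (x : Fin n → ℝ) : evnorm x ^ 2 = ∑ i, x i ^ 2 :=
  Real.sq_sqrt (Finset.sum_nonneg fun _ _ => sq_nonneg _)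

lemma evnorm_add_le (u v : Fin n → ℝ) : evnorm (u + v) ≤ evnorm u + evnorm v := by
  rw [evnorm_toE, evnorm_toE, evnorm_toE]
  exact norm_add_le (toE u) (toE v)

lemma evnorm_smul (c : ℝ) (u : Fin n → ℝ) : evnorm (c • u) = |c| * evnorm u := by
  rw [evnorm_toE, evnorm_toE]
  rw [show toE (c • u) = c • toE u from rfl, norm_smul, Real.norm_eq_abs]

lemma evnorm_eq_zero {u : Fin n → ℝ} (h : evnorm u = 0) : u = 0 := by
  have h2 : evnorm u ^ 2 = 0 := by rw [h]; ring
  rw [evnorm_sq] at h2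
  funext i
  have := (Finset.sum_eq_zero_iff_of_nonneg (fun i _ => sq_nonneg (u i))).1 h2 i (Finset.mem_univ i)
  exact pow_eq_zero_iff (by norm_num) |>.1 this

lemma dot_cs (u v : Fin n → ℝ) : |u ⬝ᵥ v| ≤ evnorm u * evnorm v := by
  have h := abs_real_inner_le_norm (toE u) (toE v)
  have h2 : (inner ℝ (toE u) (toE v) : ℝ) = u ⬝ᵥ v := by
    simp [toE, PiLp.inner_apply, dotProduct, RCLike.inner_apply, mul_comm]
  rw [h2] at h
  rw [evnorm_toE, evnorm_toE]
  exact h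

lemma dot_self_eq (u : Fin n → ℝ) : u ⬝ᵥ u = evnorm u ^ 2 := by
  rw [evnorm_sq]; simp [dotProduct, sq]

lemma evnorm_mono {u v : Fin n → ℝ} (h : ∀ i, |u i| ≤ |v i|) : evnorm u ≤ evnorm v := by
  apply Real.sqrt_le_sqrt
  apply Finset.sum_le_sum
  intro i _
  calc u i ^ 2 = |u i| ^ 2 := (sq_abs _).symm
    _ ≤ |v i| ^ 2 := pow_le_pow_left₀ (abs_nonneg _) (h i) 2
    _ = v i ^ 2 := sq_abs _

lemma specSet_bddAbove (M : Matrix (Fin n) (Fin n) ℝ) :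
    BddAbove {c : ℝ | ∃ x : Fin n → ℝ, evnorm x = 1 ∧ c = evnorm (M *ᵥ x)} := by
  refine ⟨Real.sqrt (∑ i, ∑ j, M i j ^ 2), ?_⟩
  rintro c ⟨x, hx, rfl⟩
  show Real.sqrt (∑ i, (M *ᵥ x) i ^ 2) ≤ _
  apply Real.sqrt_le_sqrt
  apply Finset.sum_le_sum
  intro i _
  have h1 : |(fun j => M i j) ⬝ᵥ x| ≤ evnorm (fun j => M i j) * evnorm x := dot_cs _ _
  have h2 : (M *ᵥ x) i = (fun j => M i j) ⬝ᵥ x := rfl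
  rw [h2]
  calc ((fun j => M i j) ⬝ᵥ x) ^ 2 = |(fun j => M i j) ⬝ᵥ x| ^ 2 := (sq_abs _).symm
    _ ≤ (evnorm (fun j => M i j) * evnorm x) ^ 2 := by
        apply pow_le_pow_left₀ (abs_nonneg _) h1
    _ = evnorm (fun j => M i j) ^ 2 * evnorm x ^ 2 := by ring
    _ = ∑ j, M i j ^ 2 := by rw [hx, one_pow, mul_one, evnorm_sq]

lemma specNorm_mulVec (M : Matrix (Fin n) (Fin n) ℝ) (v : Fin n → ℝ) :
    evnorm (M *ᵥ v) ≤ specNorm M * evnorm v := by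
  rcases eq_or_ne (evnorm v) 0 with h0 | h0
  · have hz : M *ᵥ v = 0 := by rw [evnorm_eq_zero h0, mulVec_zero]
    rw [hz, h0, mul_zero]
    simp [evnorm]
  · have hpos : 0 < evnorm v := lt_of_le_of_ne (evnorm_nonneg v) (Ne.symm h0)
    set c := (evnorm v)⁻¹ with hc
    have hcp : 0 < c := inv_pos.2 hpos
    have hu1 : evnorm (c • v) = 1 := by
      rw [evnorm_smul, abs_of_pos hcp, hc, inv_mul_cancel₀ h0]
    have hmem : evnorm (M *ᵥ (c • v)) ∈
        {c : ℝ | ∃ x : Fin n → ℝ, evnorm x = 1 ∧ c = evnorm (M *ᵥ x)} := ⟨c • v, hu1, rfl⟩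
    have hle : evnorm (M *ᵥ (c • v)) ≤ specNorm M := le_csSup (specSet_bddAbove M) hmem
    rw [mulVec_smul, evnorm_smul, abs_of_pos hcp] at hle
    calc evnorm (M *ᵥ v) = evnorm v * (c * evnorm (M *ᵥ v)) := by
          rw [hc, mul_inv_cancel_left₀ h0]
      _ ≤ evnorm v * specNorm M := by
          apply mul_le_mul_of_nonneg_left hle (le_of_lt hpos)
      _ = specNorm M * evnorm v := mul_comm _ _

lemma sigmaMin_mulVec (M : Matrix (Fin n) (Fin n) ℝ) (v : Fin n → ℝ) :
    sigmaMin M * evnorm v ≤ evnorm (M *ᵥ v) := by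
  rcases eq_or_ne (evnorm v) 0 with h0 | h0
  · rw [h0, mul_zero]; exact evnorm_nonneg _
  · have hpos : 0 < evnorm v := lt_of_le_of_ne (evnorm_nonneg v) (Ne.symm h0)
    set c := (evnorm v)⁻¹ with hc
    have hcp : 0 < c := inv_pos.2 hpos
    have hu1 : evnorm (c • v) = 1 := by
      rw [evnorm_smul, abs_of_pos hcp, hc, inv_mul_cancel₀ h0]
    have hbb : BddBelow {c : ℝ | ∃ x : Fin n → ℝ, evnorm x = 1 ∧ c = evnorm (M *ᵥ x)} := by
      refine ⟨0, ?_⟩; rintro c ⟨x, hx, rfl⟩; exact evnorm_nonneg _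
    have hle : sigmaMin M ≤ evnorm (M *ᵥ (c • v)) := csInf_le hbb ⟨c • v, hu1, rfl⟩
    rw [mulVec_smul, evnorm_smul, abs_of_pos hcp] at hle
    calc sigmaMin M * evnorm v ≤ c * evnorm (M *ᵥ v) * evnorm v := by
          apply mul_le_mul_of_nonneg_right hle (le_of_lt hpos)
      _ = evnorm (M *ᵥ v) := by rw [hc, mul_right_comm, inv_mul_cancel₀ h0, one_mul]

end helpers

set_option maxHeartbeats 1000000 in
theorem stmt18 {n : ℕ} (A : Matrix (Fin n) (Fin n) ℝ) (b : Fin n → ℝ)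
    (hA : 1 < sigmaMin A) (γ : ℝ) (hγ : 0 < γ)
    (xs : Fin n → ℝ) (hxs : A *ᵥ xs - vabs xs - b = 0) :
    ∀ x : Fin n → ℝ,
      (x - xs) ⬝ᵥ (-(γ • (Aᵀ *ᵥ (A *ᵥ x - vabs x - b)))) ≤
        -(γ * (sigmaMin A ^ 2 - 1) ^ 2 / (specNorm (A + 1) + specNorm (A - 1)) ^ 2) *
          (1 / 2 * evnorm (x - xs) ^ 2) := by
  intro x
  rcases Nat.eq_zero_or_pos n with hn | hn
  · exfalso
    subst hn
    have hempty : {c : ℝ | ∃ x : Fin 0 → ℝ, evnorm x = 1 ∧ c = evnorm (A *ᵥ x)} = ∅ := by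
      ext c
      simp only [Set.mem_setOf_eq, Set.mem_empty_iff_false, iff_false, not_exists]
      rintro y ⟨hy, -⟩
      have : evnorm y = 0 := by simp [evnorm]
      rw [this] at hy; norm_num at hy
    have : sigmaMin A = 0 := by rw [sigmaMin, hempty, Real.sInf_empty]
    linarith
  -- unit vector
  set u0 : Fin n → ℝ := Pi.single (⟨0, hn⟩ : Fin n) 1 with hu0def
  have hu0 : evnorm u0 = 1 := by
    have hsum : (∑ i, u0 i ^ 2) = 1 := by
      rw [hu0def]; simp [Pi.single_apply]
    have hdef : evnorm u0 = Real.sqrt (∑ i, u0 i ^ 2) := rfl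
    rw [hdef, hsum, Real.sqrt_one]
  have specNonneg : ∀ M : Matrix (Fin n) (Fin n) ℝ, 0 ≤ specNorm M := by
    intro M
    have h := specNorm_mulVec M u0
    rw [hu0, mul_one] at h
    exact le_trans (evnorm_nonneg _) h
  set L1 := specNorm (A + 1) with hL1def
  set L2 := specNorm (A - 1) with hL2def
  have hL1nn : 0 ≤ L1 := specNonneg _
  have hL2nn : 0 ≤ L2 := specNonneg _
  -- L1 + L2 ≥ 2
  have hK2 : 2 ≤ L1 + L2 := by
    have h1 : evnorm ((A + 1) *ᵥ u0) ≤ L1 := by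
      have := specNorm_mulVec (A + 1) u0; rwa [hu0, mul_one] at this
    have h2 : evnorm ((A - 1) *ᵥ u0) ≤ L2 := by
      have := specNorm_mulVec (A - 1) u0; rwa [hu0, mul_one] at this
    have h4 : u0 + u0 = (A + 1) *ᵥ u0 + (-1 : ℝ) • ((A - 1) *ᵥ u0) := by
      rw [neg_one_smul, add_mulVec, sub_mulVec, one_mulVec]; abel
    have h5 : evnorm (u0 + u0) = 2 := by
      have : u0 + u0 = (2 : ℝ) • u0 := by
        funext i; simp [Pi.smul_apply, smul_eq_mul, two_mul]
      rw [this, evnorm_smul, hu0]; norm_num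
    have h6 := evnorm_add_le ((A + 1) *ᵥ u0) ((-1 : ℝ) • ((A - 1) *ᵥ u0))
    rw [← h4, h5, evnorm_smul] at h6
    simp only [abs_neg, abs_one, one_mul] at h6
    linarith
  have hKpos : 0 < L1 + L2 := by linarith
  -- setup
  set d := x - xs with hd
  set e := vabs x - vabs xs with he
  set r := A *ᵥ x - vabs x - b with hr
  set a := A *ᵥ d with ha
  have hre : r = a - e := by
    calc r = (A *ᵥ x - vabs x - b) - (A *ᵥ xs - vabs xs - b) := by rw [hxs, sub_zero]
      _ = a - e := by rw [ha, hd, he, mulVec_sub]; abel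
  have hdi : ∀ i, d i = x i - xs i := fun i => by rw [hd]; rfl
  have hei : ∀ i, e i = |x i| - |xs i| := fun i => by rw [he]; rfl
  have habs : ∀ i, |e i| ≤ |d i| := fun i => by
    rw [hdi, hei]; exact abs_abs_sub_abs_le_abs_sub _ _
  have hEe : evnorm e ≤ evnorm d := evnorm_mono habs
  have hEa : sigmaMin A * evnorm d ≤ evnorm a := by rw [ha]; exact sigmaMin_mulVec A d
  -- transpose dot
  have hdt : d ⬝ᵥ (Aᵀ *ᵥ r) = a ⬝ᵥ r := by
    rw [dotProduct_mulVec, vecMul_transpose, ha]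
  -- expansion
  have hexp : 2 * (a ⬝ᵥ r) = evnorm r ^ 2 + evnorm a ^ 2 - evnorm e ^ 2 := by
    rw [← dot_self_eq, ← dot_self_eq, ← dot_self_eq, hre]
    simp only [sub_dotProduct, dotProduct_sub]
    rw [dotProduct_comm e a]
    ring
  have ha2 : sigmaMin A ^ 2 * evnorm d ^ 2 ≤ evnorm a ^ 2 := by
    nlinarith [mul_self_le_mul_self
      (mul_nonneg (by linarith : (0:ℝ) ≤ sigmaMin A) (evnorm_nonneg d)) hEa]
  have he2 : evnorm e ^ 2 ≤ evnorm d ^ 2 := by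
    nlinarith [mul_self_le_mul_self (evnorm_nonneg e) hEe]
  have hσ2 : (1:ℝ) ≤ sigmaMin A ^ 2 := by nlinarith [hA]
  have hd2 : evnorm d ^ 2 ≤ sigmaMin A ^ 2 * evnorm d ^ 2 := by
    nlinarith [mul_le_mul_of_nonneg_right hσ2 (sq_nonneg (evnorm d))]
  have key1 : evnorm r ^ 2 ≤ 2 * (a ⬝ᵥ r) := by
    rw [hexp]
    linarith [ha2, he2, hd2]
  -- s, p, q
  set s : Fin n → ℝ := fun i => if d i = 0 then 0 else e i / d i with hs
  have hes : ∀ i, e i = s i * d i := by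
    intro i
    by_cases h : d i = 0
    · have h1 : |e i| ≤ 0 := by rw [← abs_eq_zero.2 h]; exact habs i
      have h2 : e i = 0 := abs_eq_zero.1 (le_antisymm h1 (abs_nonneg _))
      simp [hs, h, h2]
    · simp only [hs, if_neg h]
      field_simp
  have hsle : ∀ i, |s i| ≤ 1 := by
    intro i
    by_cases h : d i = 0
    · simp [hs, h]
    · simp only [hs, if_neg h, abs_div]
      rw [div_le_one (abs_pos.2 h)]
      exact habs i
  set p : Fin n → ℝ := fun i => (1 + s i) / 2 * d i with hp
  set q : Fin n → ℝ := fun i => (1 - s i) / 2 * d i with hq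
  have hpq1 : p + q = d := by funext i; show (1 + s i) / 2 * d i + (1 - s i) / 2 * d i = d i; ring
  have hpq2 : p - q = e := by
    funext i
    show (1 + s i) / 2 * d i - (1 - s i) / 2 * d i = e i
    rw [hes i]; ring
  have hpnorm : evnorm p ≤ evnorm d := by
    apply evnorm_mono
    intro i
    show |(1 + s i) / 2 * d i| ≤ |d i|
    rw [abs_mul]
    apply mul_le_of_le_one_left (abs_nonneg _)
    obtain ⟨h1, h2⟩ := abs_le.1 (hsle i)
    rw [abs_le]; constructor <;> [linarith; linarith]
  have hqnorm : evnorm q ≤ evnorm d := by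
    apply evnorm_mono
    intro i
    show |(1 - s i) / 2 * d i| ≤ |d i|
    rw [abs_mul]
    apply mul_le_of_le_one_left (abs_nonneg _)
    obtain ⟨h1, h2⟩ := abs_le.1 (hsle i)
    rw [abs_le]; constructor <;> [linarith; linarith]
  have hid : a + e = (A + 1) *ᵥ p + (A - 1) *ᵥ q := by
    rw [ha, ← hpq1, ← hpq2, mulVec_add, add_mulVec, sub_mulVec, one_mulVec, one_mulVec]
    abel
  have haepe : evnorm (a + e) ≤ (L1 + L2) * evnorm d := by
    calc evnorm (a + e) = evnorm ((A + 1) *ᵥ p + (A - 1) *ᵥ q) := by rw [hid]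
      _ ≤ evnorm ((A + 1) *ᵥ p) + evnorm ((A - 1) *ᵥ q) := evnorm_add_le _ _
      _ ≤ L1 * evnorm p + L2 * evnorm q :=
          add_le_add (specNorm_mulVec _ _) (specNorm_mulVec _ _)
      _ ≤ L1 * evnorm d + L2 * evnorm d :=
          add_le_add (mul_le_mul_of_nonneg_left hpnorm hL1nn)
            (mul_le_mul_of_nonneg_left hqnorm hL2nn)
      _ = (L1 + L2) * evnorm d := by ring
  -- key2
  have hne : a ⬝ᵥ a - e ⬝ᵥ e = r ⬝ᵥ (a + e) := by
    rw [hre]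
    simp only [sub_dotProduct, dotProduct_add]
    rw [dotProduct_comm e a]
    ring
  have h5 : r ⬝ᵥ (a + e) ≤ evnorm r * evnorm (a + e) :=
    le_trans (le_abs_self _) (dot_cs _ _)
  have key2 : (sigmaMin A ^ 2 - 1) * evnorm d ^ 2 ≤ evnorm r * ((L1 + L2) * evnorm d) := by
    have hfirst : (sigmaMin A ^ 2 - 1) * evnorm d ^ 2 ≤ evnorm a ^ 2 - evnorm e ^ 2 := by
      have hring : (sigmaMin A ^ 2 - 1) * evnorm d ^ 2
          = sigmaMin A ^ 2 * evnorm d ^ 2 - evnorm d ^ 2 := by ring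
      rw [hring]
      linarith [ha2, he2, hd2]
    have hmid : evnorm a ^ 2 - evnorm e ^ 2 = r ⬝ᵥ (a + e) := by
      rw [← dot_self_eq, ← dot_self_eq]; exact hne
    have hlast : evnorm r * evnorm (a + e) ≤ evnorm r * ((L1 + L2) * evnorm d) :=
      mul_le_mul_of_nonneg_left haepe (evnorm_nonneg r)
    linarith
  -- squared bound
  have hμpos : 0 < sigmaMin A ^ 2 - 1 := by nlinarith [hA]
  have hsq : (sigmaMin A ^ 2 - 1) ^ 2 * evnorm d ^ 2 ≤ (L1 + L2) ^ 2 * evnorm r ^ 2 := by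
    rcases eq_or_lt_of_le (evnorm_nonneg d) with hD0 | hDpos
    · rw [← hD0]
      have h0 : (0:ℝ) ≤ (L1 + L2) ^ 2 * evnorm r ^ 2 :=
        mul_nonneg (sq_nonneg _) (sq_nonneg _)
      nlinarith [h0]
    · have hstep : (sigmaMin A ^ 2 - 1) * evnorm d ≤ evnorm r * (L1 + L2) := by
        nlinarith [key2, hDpos]
      nlinarith [hstep, hμpos, evnorm_nonneg d, evnorm_nonneg r, hKpos]
  -- finish
  have hlhs : d ⬝ᵥ (-(γ • (Aᵀ *ᵥ r))) = -(γ * (a ⬝ᵥ r)) := by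
    rw [dotProduct_neg, dotProduct_smul, smul_eq_mul, hdt]
  rw [hlhs,
    show -(γ * (sigmaMin A ^ 2 - 1) ^ 2 / (L1 + L2) ^ 2) * (1 / 2 * evnorm d ^ 2)
        = -((γ * (sigmaMin A ^ 2 - 1) ^ 2 * (1 / 2 * evnorm d ^ 2)) / (L1 + L2) ^ 2) by ring,
    neg_le_neg_iff]
  rw [div_le_iff₀ (pow_pos hKpos 2)]
  nlinarith [mul_le_mul_of_nonneg_left hsq hγ.le,
    mul_le_mul_of_nonneg_left key1 (mul_nonneg hγ.le (sq_nonneg (L1 + L2)))]
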